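/- arXiv:2108.10423 — 5 statements merged into one kernel-verified Lean document; each statement's English description precedes it below -/
import Mathlib

section
/- Let m₁, …, m_L be positive integers, U₁, U₂ subsets with U₁ ∪ U₂ = {1,…,L}. Set D = (lcm(m_l : l∈U₁) + lcm(m_l : l∈U₂))/2 and Y = |lcm(m_l : l∈U₁) − lcm(m_l : l∈U₂)|/2 (assuming both are integers, e.g., both lcms have the same parity). Then 0 ≤ Y < D and for every l ∈ {1,…,L}, the unordered residue pair {⟨D⟩_{m_l}, ⟨−D⟩_{m_l}} equals {⟨Y⟩_{m_l}, ⟨−Y⟩_{m_l}}. -/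
lemma pairlem (n a b : ℤ) (h : n ∣ a - b ∨ n ∣ a + b) :
    ({a % n, (-a) % n} : Set ℤ) = {b % n, (-b) % n} := by
  rcases h with h | h
  · have h1 : a % n = b % n := Int.ModEq.symm (Int.modEq_iff_dvd.mpr h)
    have h2 : (-a) % n = (-b) % n := by
      apply Int.ModEq.symm
      apply Int.modEq_iff_dvd.mpr
      have : (-a) - (-b) = -(a - b) := by ring
      rw [this]; exact h.neg_right
    rw [h1, h2]
  · have h1 : a % n = (-b) % n := by
      apply Int.ModEq.symm
      apply Int.modEq_iff_dvd.mpr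
      have : a - (-b) = a + b := by ring
      rw [this]; exact h
    have h2 : (-a) % n = b % n := by
      apply Int.ModEq.symm
      apply Int.modEq_iff_dvd.mpr
      have : (-a) - b = -(a + b) := by ring
      rw [this]; exact h.neg_right
    rw [h1, h2, Set.pair_comm]

theorem stmt7 (L : ℕ) (m : Fin L → ℕ) (hm : ∀ l, 0 < m l)
    (U₁ U₂ : Finset (Fin L)) (hcover : U₁ ∪ U₂ = Finset.univ)
    (D Y : ℤ)
    (hD : 2 * D = ((U₁.lcm m : ℕ) : ℤ) + ((U₂.lcm m : ℕ) : ℤ))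
    (hY : 2 * Y = |((U₁.lcm m : ℕ) : ℤ) - ((U₂.lcm m : ℕ) : ℤ)|) :
    0 ≤ Y ∧ Y < D ∧
    ∀ l, ({D % (m l : ℤ), (-D) % (m l : ℤ)} : Set ℤ)
        = {Y % (m l : ℤ), (-Y) % (m l : ℤ)} := by
  set M₁ : ℤ := ((U₁.lcm m : ℕ) : ℤ) with hM₁
  set M₂ : ℤ := ((U₂.lcm m : ℕ) : ℤ) with hM₂
  have hp1 : 0 < M₁ := by
    rw [hM₁]
    exact_mod_cast Nat.pos_of_ne_zero (by
      simp only [ne_eq, Finset.lcm_eq_zero_iff, Set.mem_image, Finset.mem_coe]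
      rintro ⟨l, -, hl⟩
      exact (hm l).ne' hl)
  have hp2 : 0 < M₂ := by
    rw [hM₂]
    exact_mod_cast Nat.pos_of_ne_zero (by
      simp only [ne_eq, Finset.lcm_eq_zero_iff, Set.mem_image, Finset.mem_coe]
      rintro ⟨l, -, hl⟩
      exact (hm l).ne' hl)
  have habs : |M₁ - M₂| = M₁ - M₂ ∨ |M₁ - M₂| = -(M₁ - M₂) := abs_choice _
  have key : (D + Y = M₁ ∧ D - Y = M₂) ∨ (D + Y = M₂ ∧ D - Y = M₁) := by
    rcases habs with h | h <;> rw [h] at hY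
    · left; omega
    · right; omega
  have hY0 : 0 ≤ Y := by nlinarith [abs_nonneg (M₁ - M₂)]
  refine ⟨hY0, by omega, fun l => ?_⟩
  have hl : l ∈ U₁ ∪ U₂ := by rw [hcover]; exact Finset.mem_univ l
  have hdvd : ((m l : ℤ)) ∣ M₁ ∨ ((m l : ℤ)) ∣ M₂ := by
    rcases Finset.mem_union.mp hl with h | h
    · left; rw [hM₁]; exact Int.natCast_dvd_natCast.mpr (Finset.dvd_lcm h)
    · right; rw [hM₂]; exact Int.natCast_dvd_natCast.mpr (Finset.dvd_lcm h)
  apply pairlem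
  rcases key with ⟨k1, k2⟩ | ⟨k1, k2⟩ <;> rcases hdvd with h | h
  · right; rw [k1]; exact h
  · left; rw [k2]; exact h
  · left; rw [k2]; exact h
  · right; rw [k1]; exact h
end

section
/- Let D, Y be integers with 0 ≤ Y < D, and m₁, …, m_L positive integers such that for each l, the unordered pairs {⟨D⟩_{m_l}, ⟨−D⟩_{m_l}} and {⟨Y⟩_{m_l}, ⟨−Y⟩_{m_l}} coincide. Then there exist subsets U₁, U₂ with U₁ ∪ U₂ = {1,…,L} such that D + Y ≡ 0 (mod lcm(m_l : l∈U₁)) and D − Y ≡ 0 (mod lcm(m_l : l∈U₂)), and consequently D ≥ (lcm(m_l : l∈U₁) + lcm(m_l : l∈U₂))/2. -/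
theorem stmt8 (L : ℕ) (m : Fin L → ℕ) (hm : ∀ l, 0 < m l)
    (D Y : ℤ) (hY0 : 0 ≤ Y) (hYD : Y < D)
    (hres : ∀ l, ({D % (m l : ℤ), (-D) % (m l : ℤ)} : Set ℤ)
        = {Y % (m l : ℤ), (-Y) % (m l : ℤ)}) :
    ∃ U₁ U₂ : Finset (Fin L), U₁ ∪ U₂ = Finset.univ ∧
      (((U₁.lcm m : ℕ) : ℤ) ∣ D + Y) ∧ (((U₂.lcm m : ℕ) : ℤ) ∣ D - Y) ∧
      ((U₁.lcm m : ℕ) : ℤ) + ((U₂.lcm m : ℕ) : ℤ) ≤ 2 * D := by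
  have key : ∀ l, ((m l : ℤ) ∣ D + Y) ∨ ((m l : ℤ) ∣ D - Y) := by
    intro l
    have h := hres l
    have hmem : D % (m l : ℤ) ∈ ({Y % (m l : ℤ), (-Y) % (m l : ℤ)} : Set ℤ) := by
      rw [← h]; exact Set.mem_insert _ _
    rcases hmem with h1 | h1
    · right
      have : D ≡ Y [ZMOD (m l : ℤ)] := h1
      exact (Int.ModEq.dvd this.symm)
    · left
      have : D ≡ -Y [ZMOD (m l : ℤ)] := h1
      have := Int.ModEq.dvd this.symm
      simpa [sub_neg_eq_add] using this
  refine ⟨Finset.univ.filter (fun l => (m l : ℤ) ∣ D + Y),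
    Finset.univ.filter (fun l => (m l : ℤ) ∣ D - Y), ?_, ?_, ?_, ?_⟩
  · ext l
    simp only [Finset.mem_union, Finset.mem_filter, Finset.mem_univ, true_and, iff_true]
    exact key l
  case refine_2 =>
    rw [Int.natCast_dvd]
    refine Finset.lcm_dvd ?_
    intro b hb
    have hb' := (Finset.mem_filter.mp hb).2
    rwa [← Int.natCast_dvd]
  case refine_3 =>
    rw [Int.natCast_dvd]
    refine Finset.lcm_dvd ?_
    intro b hb
    have hb' := (Finset.mem_filter.mp hb).2
    rwa [← Int.natCast_dvd]
  case refine_4 =>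
    have hd1 : (((Finset.univ.filter (fun l => (m l : ℤ) ∣ D + Y)).lcm m : ℕ) : ℤ) ∣ D + Y := by
      rw [Int.natCast_dvd]
      exact Finset.lcm_dvd (fun b hb => (Int.natCast_dvd).mp (Finset.mem_filter.mp hb).2)
    have hd2 : (((Finset.univ.filter (fun l => (m l : ℤ) ∣ D - Y)).lcm m : ℕ) : ℤ) ∣ D - Y := by
      rw [Int.natCast_dvd]
      exact Finset.lcm_dvd (fun b hb => (Int.natCast_dvd).mp (Finset.mem_filter.mp hb).2)
    have h1 := Int.le_of_dvd (by linarith) hd1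
    have h2 := Int.le_of_dvd (by linarith) hd2
    linarith
end

section
/- Let Γ, M₁, …, M_L be positive integers with the M_l pairwise coprime, and set m_l = Γ·M_l. Let X be a nonnegative integer and write r_l = X mod m_l, r_c = X mod Γ. Then for each l, ⌊X/Γ⌋ ≡ (r_l − r_c)/Γ (mod M_l), where (r_l − r_c)/Γ is an integer. -/
theorem stmt9 (L : ℕ) (Γ : ℕ) (hΓ : 0 < Γ) (M : Fin L → ℕ) (hM : ∀ l, 0 < M l)
    (hcop : ∀ l l', l ≠ l' → Nat.Coprime (M l) (M l')) (X : ℕ) :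
    ∀ l, Γ ∣ (X % (Γ * M l) - X % Γ) ∧
      X / Γ ≡ (X % (Γ * M l) - X % Γ) / Γ [MOD M l] := by
  intro l
  have hkey : X % (Γ * M l) - X % Γ = Γ * (X / Γ % M l) := by
    have h1 : X % (Γ * M l) / Γ = X / Γ % M l := Nat.mod_mul_right_div_self X Γ (M l)
    have h2 : X % (Γ * M l) % Γ = X % Γ := Nat.mod_mul_right_mod X Γ (M l)
    have h3 := Nat.div_add_mod (X % (Γ * M l)) Γ
    rw [h1, h2] at h3
    omega
  rw [hkey]
  refine ⟨Dvd.intro _ rfl, ?_⟩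
  rw [Nat.mul_div_cancel_left _ hΓ]
  simp [Nat.ModEq, Nat.mod_mod_of_dvd]
end

section
/- Let Γ > 0 be real, X ≥ 0 real with common residue r_c = ⟨X⟩_Γ, and let Δ be a real error with |Δ| < Γ/4. Let m = ΓM for a positive integer M, and let r̃ = ⟨X + Δ⟩_m. Then exactly one of the following holds: (1) r_c + Δ ∈ [0, Γ) and ⌊r̃/Γ⌋ ≡ ⌊X/Γ⌋ (mod M); (2) r_c + Δ ∈ (−Γ, 0) and ⌊r̃/Γ⌋ ≡ ⌊X/Γ⌋ − 1 (mod M); (3) r_c + Δ ∈ [Γ, 2Γ) and ⌊r̃/Γ⌋ ≡ ⌊X/Γ⌋ + 1 (mod M). -/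
/-- Generalized modulo operation for real numbers: `⟨a⟩_b = a - ⌊a/b⌋·b`. -/
noncomputable def rmod (a b : ℝ) : ℝ := a - (⌊a / b⌋ : ℤ) * b

theorem stmt10 (Γ : ℝ) (hΓ : 0 < Γ) (X : ℝ) (hX : 0 ≤ X)
    (M : ℕ) (hM : 0 < M) (Δ : ℝ) (hΔ : |Δ| < Γ / 4)
    (rc : ℝ) (hrc : rc = rmod X Γ)
    (r : ℝ) (hr : r = rmod (X + Δ) (Γ * M)) :
    ((rc + Δ ∈ Set.Ico 0 Γ ∧ ⌊r / Γ⌋ ≡ ⌊X / Γ⌋ [ZMOD (M : ℤ)]) ∧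
      ¬(rc + Δ ∈ Set.Ioo (-Γ) 0) ∧ ¬(rc + Δ ∈ Set.Ico Γ (2 * Γ))) ∨
    ((rc + Δ ∈ Set.Ioo (-Γ) 0 ∧ ⌊r / Γ⌋ ≡ ⌊X / Γ⌋ - 1 [ZMOD (M : ℤ)]) ∧
      ¬(rc + Δ ∈ Set.Ico 0 Γ) ∧ ¬(rc + Δ ∈ Set.Ico Γ (2 * Γ))) ∨
    ((rc + Δ ∈ Set.Ico Γ (2 * Γ) ∧ ⌊r / Γ⌋ ≡ ⌊X / Γ⌋ + 1 [ZMOD (M : ℤ)]) ∧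
      ¬(rc + Δ ∈ Set.Ico 0 Γ) ∧ ¬(rc + Δ ∈ Set.Ioo (-Γ) 0)) := by
  have hΓ0 : Γ ≠ 0 := ne_of_gt hΓ
  set n : ℤ := ⌊X / Γ⌋ with hn
  set k : ℤ := ⌊(X + Δ) / (Γ * M)⌋ with hk
  have hrcv : rc = X - (n : ℝ) * Γ := by rw [hrc]; rfl
  have hrv : r = X + Δ - (k : ℝ) * (Γ * M) := by rw [hr]; rfl
  -- bounds on rc
  have hrc0 : 0 ≤ rc := by
    rw [hrcv, hn]; exact Int.sub_floor_div_mul_nonneg X hΓ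
  have hrc1 : rc < Γ := by
    rw [hrcv, hn]; exact Int.sub_floor_div_mul_lt X hΓ
  have hΔ1 : -Γ/4 < Δ := (abs_lt.mp hΔ).1 |>.trans_le' (by linarith)
  have hΔ2 : Δ < Γ/4 := (abs_lt.mp hΔ).2
  -- key computation
  have key : ∀ c : ℤ, ⌊(rc + Δ) / Γ⌋ = c → ⌊r / Γ⌋ = n + c - k * M := by
    intro c hc
    have h1 : r / Γ = (rc + Δ) / Γ + ((n - k * M : ℤ) : ℝ) := by
      field_simp [hrv, hrcv]
      rw [hrv, hrcv]
      push_cast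
      ring
    rw [h1, Int.floor_add_intCast, hc]
    ring
  have modeq : ∀ c : ℤ, ⌊(rc + Δ) / Γ⌋ = c → ⌊r / Γ⌋ ≡ n + c [ZMOD (M : ℤ)] := by
    intro c hc
    rw [key c hc]
    have : ((M : ℤ)) ∣ (n + c) - (n + c - k * M) := ⟨k, by ring⟩
    exact (Int.modEq_iff_dvd.mpr this)
  rcases lt_or_ge (rc + Δ) 0 with hlt | hge
  · -- case (-Γ, 0)
    have hmem : rc + Δ ∈ Set.Ioo (-Γ) 0 := ⟨by linarith, hlt⟩
    have hfl : ⌊(rc + Δ) / Γ⌋ = -1 := by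
      rw [Int.floor_eq_iff]
      constructor
      · push_cast
        rw [le_div_iff₀ hΓ]
        linarith
      · push_cast
        rw [div_lt_iff₀ hΓ]
        linarith
    refine Or.inr (Or.inl ⟨⟨hmem, by simpa [← sub_eq_add_neg] using modeq (-1) hfl⟩, ?_, ?_⟩)
    · rintro ⟨h1, h2⟩; linarith
    · rintro ⟨h1, h2⟩; linarith
  · rcases lt_or_ge (rc + Δ) Γ with hlt2 | hge2
    · -- case [0, Γ)
      have hmem : rc + Δ ∈ Set.Ico 0 Γ := ⟨hge, hlt2⟩
      have hfl : ⌊(rc + Δ) / Γ⌋ = 0 := by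
        rw [Int.floor_eq_iff]
        constructor
        · push_cast
          positivity
        · push_cast
          rw [div_lt_iff₀ hΓ]
          linarith
      refine Or.inl ⟨⟨hmem, by simpa using modeq 0 hfl⟩, ?_, ?_⟩
      · rintro ⟨h1, h2⟩; linarith
      · rintro ⟨h1, h2⟩; linarith
    · -- case [Γ, 2Γ)
      have hmem : rc + Δ ∈ Set.Ico Γ (2 * Γ) := ⟨hge2, by linarith⟩
      have hfl : ⌊(rc + Δ) / Γ⌋ = 1 := by
        rw [Int.floor_eq_iff]
        constructor
        · push_cast
          rw [le_div_iff₀ hΓ]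
          linarith
        · push_cast
          rw [div_lt_iff₀ hΓ]
          linarith
      refine Or.inr (Or.inr ⟨⟨hmem, modeq 1 hfl⟩, ?_, ?_⟩)
      · rintro ⟨h1, h2⟩; linarith
      · rintro ⟨h1, h2⟩; linarith
end

section
/- Let Γ be a positive integer, M a positive integer, m = ΓM, and let X, Y be integers with true residues r = ⟨X⟩_m, r' = ⟨Y⟩_m satisfying min_{d ∈ {0, ±1}} |r − r' + d·m| > 3Γ. Let q ∈ {⌊X/Γ⌋, ⌊X/Γ⌋±1} and q' ∈ {⌊Y/Γ⌋, ⌊Y/Γ⌋±1} be any perturbed folding numbers. Then q ≢ q' (mod M). -/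
set_option maxHeartbeats 1000000


theorem stmt16 (Γ M : ℕ) (hΓ : 0 < Γ) (hM : 0 < M) (m : ℕ) (hm : m = Γ * M)
    (X Y : ℤ) (r r' : ℤ) (hr : r = X % (m : ℤ)) (hr' : r' = Y % (m : ℤ))
    (hsep : ∀ d : ℤ, d = 0 ∨ d = 1 ∨ d = -1 → |r - r' + d * (m : ℤ)| > 3 * (Γ : ℤ))
    (q q' : ℤ)
    (hq : q = X / (Γ : ℤ) ∨ q = X / (Γ : ℤ) + 1 ∨ q = X / (Γ : ℤ) - 1)
    (hq' : q' = Y / (Γ : ℤ) ∨ q' = Y / (Γ : ℤ) + 1 ∨ q' = Y / (Γ : ℤ) - 1) :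
    ¬ q ≡ q' [ZMOD (M : ℤ)] := by
  intro hcong
  have hΓ' : (0:ℤ) < (Γ:ℤ) := by exact_mod_cast hΓ
  have hM' : (0:ℤ) < (M:ℤ) := by exact_mod_cast hM
  have hmZ : (m:ℤ) = (Γ:ℤ) * (M:ℤ) := by rw [hm]; push_cast; ring
  have hm' : (0:ℤ) < (m:ℤ) := by rw [hmZ]; positivity
  have hr0 : 0 ≤ r := by rw [hr]; exact Int.emod_nonneg _ (ne_of_gt hm')
  have hr1 : r < (m:ℤ) := by rw [hr]; exact Int.emod_lt_of_pos _ hm'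
  have hr0' : 0 ≤ r' := by rw [hr']; exact Int.emod_nonneg _ (ne_of_gt hm')
  have hr1' : r' < (m:ℤ) := by rw [hr']; exact Int.emod_lt_of_pos _ hm'
  -- M = 1 case: immediate contradiction from hsep with d = 0
  rcases eq_or_lt_of_le (show (1:ℤ) ≤ (M:ℤ) from hM') with hM1 | hM2
  · have h0 := hsep 0 (Or.inl rfl)
    have hmΓ : (m:ℤ) = (Γ:ℤ) := by rw [hmZ, ← hM1]; ring
    rcases abs_cases (r - r' + 0 * (m:ℤ)) with ⟨h1, _⟩ | ⟨h1, _⟩ <;>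
      rw [h1] at h0 <;> rw [hmΓ] at hr1 hr1' <;> linarith
  -- decomposition of X / Γ and Y / Γ
  have hX : X = r + (Γ:ℤ) * ((M:ℤ) * (X / (m:ℤ))) := by
    have h2 := Int.emod_add_mul_ediv X (m:ℤ)
    rw [← hr] at h2; rw [hmZ] at h2 ⊢; linarith [h2]
  have hY : Y = r' + (Γ:ℤ) * ((M:ℤ) * (Y / (m:ℤ))) := by
    have h2 := Int.emod_add_mul_ediv Y (m:ℤ)
    rw [← hr'] at h2; rw [hmZ] at h2 ⊢; linarith [h2]
  set k : ℤ := X / (m:ℤ) with hk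
  set k' : ℤ := Y / (m:ℤ) with hk'
  have hXdiv : X / (Γ:ℤ) = r / (Γ:ℤ) + (M:ℤ) * k := by
    conv_lhs => rw [hX]
    exact Int.add_mul_ediv_left r ((M:ℤ) * k) (ne_of_gt hΓ')
  have hYdiv : Y / (Γ:ℤ) = r' / (Γ:ℤ) + (M:ℤ) * k' := by
    conv_lhs => rw [hY]
    exact Int.add_mul_ediv_left r' ((M:ℤ) * k') (ne_of_gt hΓ')
  set a : ℤ := r / (Γ:ℤ) with ha
  set b : ℤ := r' / (Γ:ℤ) with hb
  -- bounds on a, b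
  have ha0 : 0 ≤ a := Int.ediv_nonneg hr0 (le_of_lt hΓ')
  have hb0 : 0 ≤ b := Int.ediv_nonneg hr0' (le_of_lt hΓ')
  have ha1 : a < (M:ℤ) := Int.ediv_lt_iff_lt_mul hΓ' |>.mpr (by rw [← hmZ, mul_comm] at *; linarith [hr1])
  have hb1 : b < (M:ℤ) := Int.ediv_lt_iff_lt_mul hΓ' |>.mpr (by rw [← hmZ, mul_comm] at *; linarith [hr1'])
  -- perturbations
  set e : ℤ := q - X / (Γ:ℤ) with he
  set e' : ℤ := q' - Y / (Γ:ℤ) with he'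
  have heb : -1 ≤ e ∧ e ≤ 1 := by rcases hq with h | h | h <;> rw [he, h] <;> omega
  have heb' : -1 ≤ e' ∧ e' ≤ 1 := by rcases hq' with h | h | h <;> rw [he', h] <;> omega
  -- divisibility
  have hdvd : (M:ℤ) ∣ q' - q := hcong.dvd
  have hdvd2 : (M:ℤ) ∣ b - a + e' - e := by
    have hqe : q = a + (M:ℤ) * k + e := by rw [he, hXdiv]; ring
    have hqe' : q' = b + (M:ℤ) * k' + e' := by rw [he', hYdiv]; ring
    have : b - a + e' - e = (q' - q) - (M:ℤ) * (k' - k) := by rw [hqe, hqe']; ring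
    rw [this]
    exact dvd_sub hdvd ⟨k' - k, rfl⟩
  obtain ⟨t, ht⟩ := hdvd2
  -- t ∈ {0, ±1}
  have hub : (M:ℤ) * t ≤ (M:ℤ) + 1 := by rw [← ht]; linarith [heb.2, heb'.2]
  have hlb : -((M:ℤ) + 1) ≤ (M:ℤ) * t := by rw [← ht]; linarith [heb.1, heb'.1]
  have ht1 : t ≤ 1 := by
    by_contra h
    push_neg at h
    have h2 : (2:ℤ) ≤ t := h
    have := mul_le_mul_of_nonneg_left h2 (le_of_lt hM')
    linarith
  have ht2 : -1 ≤ t := by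
    by_contra h
    push_neg at h
    have h2 : t ≤ -2 := by linarith
    have := mul_le_mul_of_nonneg_left h2 (le_of_lt hM')
    linarith
  -- residues mod Γ
  have hu1 : (Γ:ℤ) * a + r % (Γ:ℤ) = r := Int.mul_ediv_add_emod r (Γ:ℤ)
  have hu2 : (Γ:ℤ) * b + r' % (Γ:ℤ) = r' := Int.mul_ediv_add_emod r' (Γ:ℤ)
  set u1 : ℤ := r % (Γ:ℤ) with hu1d
  set u2 : ℤ := r' % (Γ:ℤ) with hu2d
  have hu1b : 0 ≤ u1 ∧ u1 < (Γ:ℤ) :=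
    ⟨Int.emod_nonneg _ (ne_of_gt hΓ'), Int.emod_lt_of_pos _ hΓ'⟩
  have hu2b : 0 ≤ u2 ∧ u2 < (Γ:ℤ) :=
    ⟨Int.emod_nonneg _ (ne_of_gt hΓ'), Int.emod_lt_of_pos _ hΓ'⟩
  -- key identity
  have hkey : r - r' + t * (m:ℤ) = (Γ:ℤ) * (e' - e) + (u1 - u2) := by
    have hab : a - b = e' - e - (M:ℤ) * t := by linarith [ht]
    rw [hmZ]
    linear_combination -(hu1 - hu2) + (Γ:ℤ) * hab
  have hfin := hsep t (by omega)
  rw [hkey] at hfin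
  have hge : (Γ:ℤ) * (e' - e) ≤ 2 * (Γ:ℤ) := by
    have h2 : e' - e ≤ 2 := by linarith [heb.1, heb'.2]
    calc (Γ:ℤ) * (e' - e) ≤ (Γ:ℤ) * 2 := mul_le_mul_of_nonneg_left h2 (le_of_lt hΓ')
      _ = 2 * (Γ:ℤ) := by ring
  have hle : -(2 * (Γ:ℤ)) ≤ (Γ:ℤ) * (e' - e) := by
    have h2 : (-2:ℤ) ≤ e' - e := by linarith [heb.2, heb'.1]
    calc -(2 * (Γ:ℤ)) = (Γ:ℤ) * (-2) := by ring
      _ ≤ (Γ:ℤ) * (e' - e) := mul_le_mul_of_nonneg_left h2 (le_of_lt hΓ')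
  rcases abs_cases ((Γ:ℤ) * (e' - e) + (u1 - u2)) with ⟨h1, _⟩ | ⟨h1, _⟩ <;>
    rw [h1] at hfin <;> linarith [hu1b.1, hu1b.2, hu2b.1, hu2b.2]
end
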